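/- arXiv:2409.11196 — 2 statements merged into one kernel-verified Lean document; each statement's English description precedes it below -/
import Mathlib

section
/- If Y and S are symmetric positive semidefinite n×n matrices with Y S = 0 and rank(Y) + rank(S) = n, then the matrix Y + S is nonsingular (invertible). -/
/-!
Since `Y * S = 0` and the ranks add up to `n`, the range of `S` is exactly the kernel of `Y`.
A vector killed by `Y + S` is killed by both `Y` and `S`, because their quadratic forms are
nonnegative; it therefore lies in `ker S ⊓ range S`, which is trivial for Hermitian `S`.
-/

open Matrix

namespace Matrix

variable {m n p : Type*} [Fintype n]

theorem range_mulVecLin_eq_ker_of_mul_eq_zero {K : Type*} [Field K] [Fintype p]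
    {A : Matrix m n K} {B : Matrix n p K} (h : A * B = 0)
    (hrank : A.rank + B.rank = Fintype.card n) :
    LinearMap.range B.mulVecLin = LinearMap.ker A.mulVecLin := by
  have hle : LinearMap.range B.mulVecLin ≤ LinearMap.ker A.mulVecLin := by
    rw [LinearMap.range_le_ker_iff, ← mulVecLin_mul, h, mulVecLin_zero]
  refine Submodule.eq_of_le_of_finrank_le hle ?_
  have := LinearMap.finrank_range_add_finrank_ker A.mulVecLin
  rw [Module.finrank_fintype_fun_eq_card] at this
  unfold rank at hrank
  omega

theorem IsHermitian.disjoint_ker_range {K : Type*} [Field K] [PartialOrder K] [StarRing K]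
    [StarOrderedRing K] {A : Matrix n n K} (hA : A.IsHermitian) :
    Disjoint (LinearMap.ker A.mulVecLin) (LinearMap.range A.mulVecLin) := by
  rw [Submodule.disjoint_def]
  rintro _ hx ⟨y, rfl⟩
  rw [LinearMap.mem_ker, ← LinearMap.comp_apply, ← mulVecLin_mul] at hx
  nth_rw 1 [← hA.eq] at hx
  rwa [← LinearMap.mem_ker, ker_mulVecLin_conjTranspose_mul_self] at hx

open scoped ComplexOrder in
theorem PosSemidef.ker_add {𝕜 : Type*} [RCLike 𝕜] {A B : Matrix n n 𝕜}
    (hA : A.PosSemidef) (hB : B.PosSemidef) :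
    LinearMap.ker (A + B).mulVecLin = LinearMap.ker A.mulVecLin ⊓ LinearMap.ker B.mulVecLin := by
  ext x
  simp only [Submodule.mem_inf, LinearMap.mem_ker, mulVecLin_apply, add_mulVec]
  refine ⟨fun hx ↦ ?_, fun ⟨hAx, hBx⟩ ↦ by rw [hAx, hBx, add_zero]⟩
  have hsum : star x ⬝ᵥ A *ᵥ x + star x ⬝ᵥ B *ᵥ x = 0 := by
    rw [← dotProduct_add, hx, dotProduct_zero]
  obtain ⟨hAx, hBx⟩ := (add_eq_zero_iff_of_nonneg (hA.dotProduct_mulVec_nonneg x)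
    (hB.dotProduct_mulVec_nonneg x)).mp hsum
  exact ⟨(hA.dotProduct_mulVec_zero_iff x).mp hAx, (hB.dotProduct_mulVec_zero_iff x).mp hBx⟩

end Matrix

theorem strict_complementarity_sum_invertible {n : ℕ}
    (Y S : Matrix (Fin n) (Fin n) ℝ)
    (hY : Y.PosSemidef) (hS : S.PosSemidef)
    (h : Y * S = 0) (hrank : Y.rank + S.rank = n) :
    IsUnit (Y + S) := by
  have hrange : LinearMap.range S.mulVecLin = LinearMap.ker Y.mulVecLin :=
    range_mulVecLin_eq_ker_of_mul_eq_zero h (by rwa [Fintype.card_fin])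
  rw [← mulVec_injective_iff_isUnit, ← coe_mulVecLin, ← LinearMap.ker_eq_bot, hY.ker_add hS,
    ← hrange, inf_comm]
  exact hS.isHermitian.disjoint_ker_range.eq_bot
end

section
/- The map X ↦ U Λ₊ Uᵀ, where X = U Λ Uᵀ is an eigendecomposition of a symmetric matrix X and Λ₊ replaces each eigenvalue by its positive part, is the metric projection of X onto the cone of positive semidefinite matrices with respect to the Frobenius norm: U Λ₊ Uᵀ is PSD and minimizes ‖X − Z‖_F over PSD matrices Z. -/
/-!
Conjugating by the orthogonal matrix `U` preserves the Frobenius norm and the PSD cone, so it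
suffices to compare `Λ` with `Y = Uᵀ Z U`, which is again PSD. Since `Λ` is diagonal, `‖Λ - Y‖²`
is at least the sum of the squared diagonal entries `(λᵢ - Yᵢᵢ)²`, and each of these is at least
`(λᵢ - max λᵢ 0)²` because `Yᵢᵢ ≥ 0`; the latter sum is exactly `‖Λ - Λ₊‖²`.
-/

open Matrix

theorem sq_sub_max_zero_le_sq_sub {R : Type*} [CommRing R] [LinearOrder R]
    [IsStrictOrderedRing R] (a : R) {y : R} (hy : 0 ≤ y) : (a - max a 0) ^ 2 ≤ (a - y) ^ 2 := by
  rcases le_total a 0 with ha | ha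
  · rw [max_eq_right ha, sub_zero]
    nlinarith [mul_nonneg hy (by linarith : 0 ≤ y - 2 * a)]
  · simp [max_eq_left ha, sq_nonneg]

namespace Matrix

variable {m n R : Type*} [Fintype m] [Fintype n]

theorem trace_transpose_mul_self_eq_sum_sq [CommSemiring R] (A : Matrix m n R) :
    (Aᵀ * A).trace = ∑ i, ∑ j, A i j ^ 2 := by
  simp only [trace, diag_apply, mul_apply, transpose_apply, sq]
  exact Finset.sum_comm

theorem trace_transpose_mul_self_diagonal [CommSemiring R] [DecidableEq n] (d : n → R) :
    ((diagonal d)ᵀ * diagonal d).trace = ∑ i, d i ^ 2 := by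
  simp [diagonal_transpose, trace_diagonal, sq]

theorem sum_sq_diag_le_trace_transpose_mul_self [CommRing R] [LinearOrder R]
    [IsStrictOrderedRing R] (A : Matrix n n R) : ∑ i, A i i ^ 2 ≤ (Aᵀ * A).trace := by
  rw [trace_transpose_mul_self_eq_sum_sq]
  exact Finset.sum_le_sum fun i _ =>
    Finset.single_le_sum (f := fun j => A i j ^ 2) (fun j _ => sq_nonneg _) (Finset.mem_univ i)

theorem trace_transpose_mul_self_conj [CommSemiring R] [DecidableEq n] {U : Matrix m n R}
    (hU : Uᵀ * U = 1) (A : Matrix n n R) :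
    ((U * A * Uᵀ)ᵀ * (U * A * Uᵀ)).trace = (Aᵀ * A).trace := by
  have hconj : (U * A * Uᵀ)ᵀ * (U * A * Uᵀ) = U * (Aᵀ * A * Uᵀ) := by
    simp only [transpose_mul, transpose_transpose, Matrix.mul_assoc]
    rw [← Matrix.mul_assoc Uᵀ U, hU, Matrix.one_mul]
  rw [hconj, trace_mul_comm, Matrix.mul_assoc, hU, Matrix.mul_one]

theorem trace_diagonal_sub_posPart_le [CommRing R] [LinearOrder R] [IsStrictOrderedRing R]
    [DecidableEq n] (d : n → R) {Y : Matrix n n R} (hY : ∀ i, 0 ≤ Y i i) :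
    ((diagonal d - diagonal fun i => max (d i) 0)ᵀ *
        (diagonal d - diagonal fun i => max (d i) 0)).trace
      ≤ ((diagonal d - Y)ᵀ * (diagonal d - Y)).trace := by
  rw [diagonal_sub, trace_transpose_mul_self_diagonal]
  calc ∑ i, (d i - max (d i) 0) ^ 2 ≤ ∑ i, (diagonal d - Y) i i ^ 2 :=
        Finset.sum_le_sum fun i _ => by
          simpa using sq_sub_max_zero_le_sq_sub (d i) (hY i)
    _ ≤ _ := sum_sq_diag_le_trace_transpose_mul_self _

end Matrix

theorem psd_projection_is_metric_projection_general {n : ℕ}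
    (X U Λ : Matrix (Fin n) (Fin n) ℝ)
    (hU : Uᵀ * U = 1) (hΛ : Λ.IsDiag)
    (hX : X = U * Λ * Uᵀ) :
    (U * Matrix.of (fun i j => if i = j then max (Λ i i) 0 else 0) * Uᵀ).PosSemidef ∧
    ∀ Z : Matrix (Fin n) (Fin n) ℝ, Z.IsSymm → Z.PosSemidef →
      Real.sqrt (((X - U * Matrix.of (fun i j => if i = j then max (Λ i i) 0 else 0) * Uᵀ)ᵀ *
        (X - U * Matrix.of (fun i j => if i = j then max (Λ i i) 0 else 0) * Uᵀ)).trace)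
      ≤ Real.sqrt (((X - Z)ᵀ * (X - Z)).trace) := by
  have hΛplus : Matrix.of (fun i j => if i = j then max (Λ i i) 0 else 0)
      = diagonal fun i => max (Λ i i) 0 := rfl
  rw [hΛplus]
  rw [← hΛ.diagonal_diag] at hX
  refine ⟨by simpa using (posSemidef_diagonal_iff.mpr fun i => le_max_right (Λ i i) 0)
    |>.mul_mul_conjTranspose_same U, fun Z _ hZ => ?_⟩
  set Y := Uᵀ * Z * U
  have hY : Y.PosSemidef := by simpa using hZ.mul_mul_conjTranspose_same Uᵀ
  have hZY : Z = U * Y * Uᵀ := by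
    have hUUt : U * Uᵀ = 1 := mul_eq_one_comm.mp hU
    simp only [Y, ← Matrix.mul_assoc, hUUt, Matrix.one_mul]
    rw [Matrix.mul_assoc, hUUt, Matrix.mul_one]
  rw [hX, hZY, ← Matrix.sub_mul, ← Matrix.mul_sub, ← Matrix.sub_mul, ← Matrix.mul_sub,
    trace_transpose_mul_self_conj hU, trace_transpose_mul_self_conj hU]
  exact Real.sqrt_le_sqrt (trace_diagonal_sub_posPart_le _ fun i => hY.diag_nonneg)

theorem psd_projection_is_metric_projection {n : ℕ}
    (X U Λ : Matrix (Fin n) (Fin n) ℝ)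
    (hXsymm : X.IsSymm) (hU : Uᵀ * U = 1) (hΛ : Λ.IsDiag)
    (hX : X = U * Λ * Uᵀ) :
    (U * Matrix.of (fun i j => if i = j then max (Λ i i) 0 else 0) * Uᵀ).PosSemidef ∧
    ∀ Z : Matrix (Fin n) (Fin n) ℝ, Z.IsSymm → Z.PosSemidef →
      Real.sqrt (((X - U * Matrix.of (fun i j => if i = j then max (Λ i i) 0 else 0) * Uᵀ)ᵀ *
        (X - U * Matrix.of (fun i j => if i = j then max (Λ i i) 0 else 0) * Uᵀ)).trace)
      ≤ Real.sqrt (((X - Z)ᵀ * (X - Z)).trace) :=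
  psd_projection_is_metric_projection_general X U Λ hU hΛ hX
end
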